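/- arXiv:1609.04746 — 2 statements merged into one kernel-verified Lean document; each statement's English description precedes it below -/
import Mathlib

section
/- (Fundamental inequality) Suppose the block indices i(k) are IID uniform on {1,…,m}, the delay vectors j⃗(k) are IID, independent of the block sequence, and evenly old, and η^k is F^k-measurable and independent of i(k). Then for any fixed point x* of T, any sequence ε₁, ε₂, … ∈ (0,∞), and every k, the ARock iterates satisfy E[‖x^{k+1} − x*‖² | F^k] ≤ ‖x^k − x*‖² + (1/m) Σ_{i=1}^{j(k)} ε_i ‖x^{k+1−i} − x^{k−i}‖² − (η^k/m) ‖S x̂^k‖² (1 − η^k (1 + Σ_{i=1}^{j(k)} 1/ε_i)). -/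
open MeasureTheory ProbabilityTheory Filter Finset
open scoped ENNReal Topology

/-!
The block `i(k)` is uniform and independent of `Fᵏ`: by induction on the recursion,
`Fᵏ ⊆ σ(i(0), …, i(k-1), j⃗(0), j⃗(1), …)`, and the blocks are independent of each other and of
the delays. Hence `E[‖xᵏ⁺¹ - x*‖² | Fᵏ]` is the average over the `m` possible updates,
`‖xᵏ - x*‖² - (2η/m)⟪xᵏ - x*, S x̂ᵏ⟫ + (η²/m)‖S x̂ᵏ‖²`.
Blockwise, `xᵏ - x̂ᵏ` telescopes into the increments `xᵏ⁻ⁱ - xᵏ⁻ⁱ⁻¹` restricted to the blocks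
whose delay exceeds `i`. This splits `⟪xᵏ - x*, S x̂ᵏ⟫` into `⟪x̂ᵏ - x*, S x̂ᵏ⟫ ≥ ‖S x̂ᵏ‖²/2`
(`S = I - T` is `1/2`-cocoercive around a fixed point of the nonexpansive `T`) and one term per
increment, each bounded by Young's inequality with weight `εᵢ₊₁`.
-/

section InnerProductSpace

variable {E : Type*} [NormedAddCommGroup E] [InnerProductSpace ℝ E]

theorem norm_sub_apply_sq_le_two_inner_of_isFixedPt {T : E → E} (hT : LipschitzWith 1 T)
    {xs : E} (hxs : Function.IsFixedPt T xs) (z : E) :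
    ‖z - T z‖ ^ 2 ≤ 2 * inner ℝ (z - xs) (z - T z) := by
  have hT' : ‖(z - xs) - (z - T z)‖ ≤ ‖z - xs‖ := by
    have := hT.dist_le_mul z xs
    rw [NNReal.coe_one, one_mul, dist_eq_norm, dist_eq_norm, hxs.eq] at this
    rwa [sub_sub_sub_cancel_left]
  have := norm_sub_sq_real (z - xs) (z - T z)
  nlinarith [pow_le_pow_left₀ (norm_nonneg _) hT' 2]

theorem two_mul_inner_le_mul_norm_sq_add_inv_mul_norm_sq (a b : E) {ε : ℝ} (hε : 0 < ε) :
    2 * inner ℝ a b ≤ ε * ‖a‖ ^ 2 + ε⁻¹ * ‖b‖ ^ 2 := by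
  have hab := real_inner_le_norm a b
  have : ε * ε⁻¹ = 1 := mul_inv_cancel₀ hε.ne'
  nlinarith [sq_nonneg (ε * ‖a‖ - ‖b‖), norm_nonneg a, norm_nonneg b]

theorem neg_two_mul_inner_sub_fixedPt_le {ι : Type*} {T : E → E} (hT : LipschitzWith 1 T)
    {xs : E} (hxs : Function.IsFixedPt T xs) {u z : E} {s : Finset ι} {y Δ : ι → E}
    (hy : u - z = ∑ i ∈ s, y i) (hΔ : ∀ i ∈ s, ‖y i‖ ≤ ‖Δ i‖)
    {ε : ι → ℝ} (hε : ∀ i ∈ s, 0 < ε i) {η : ℝ} (hη : 0 ≤ η) :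
    -(2 * η * inner ℝ (u - xs) (z - T z))
      ≤ ∑ i ∈ s, ε i * ‖Δ i‖ ^ 2 - η * ‖z - T z‖ ^ 2
        + η ^ 2 * ‖z - T z‖ ^ 2 * ∑ i ∈ s, (ε i)⁻¹ := by
  set d := z - T z
  have hfirm := norm_sub_apply_sq_le_two_inner_of_isFixedPt hT hxs z
  have hterm : ∀ i ∈ s, -(2 * η * inner ℝ (y i) d)
      ≤ ε i * ‖Δ i‖ ^ 2 + (ε i)⁻¹ * (η ^ 2 * ‖d‖ ^ 2) := by
    intro i hi
    have hY := two_mul_inner_le_mul_norm_sq_add_inv_mul_norm_sq (-y i) (η • d) (hε i hi)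
    rw [inner_neg_left, real_inner_smul_right, norm_neg, norm_smul, mul_pow,
      Real.norm_eq_abs, sq_abs] at hY
    have := mul_le_mul_of_nonneg_left
      (pow_le_pow_left₀ (norm_nonneg _) (hΔ i hi) 2) (hε i hi).le
    linarith
  have hsplit : inner ℝ (u - xs) d = ∑ i ∈ s, inner ℝ (y i) d + inner ℝ (z - xs) d := by
    rw [← sum_inner, ← hy, ← inner_add_left, sub_add_sub_cancel]
  calc -(2 * η * inner ℝ (u - xs) d)
      = ∑ i ∈ s, -(2 * η * inner ℝ (y i) d) - η * (2 * inner ℝ (z - xs) d) := by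
        rw [hsplit, sum_neg_distrib, ← mul_sum]; ring
    _ ≤ ∑ i ∈ s, (ε i * ‖Δ i‖ ^ 2 + (ε i)⁻¹ * (η ^ 2 * ‖d‖ ^ 2)) - η * ‖d‖ ^ 2 := by
        gcongr with i hi
        exact hterm i hi
    _ = _ := by rw [sum_add_distrib, ← sum_mul]; ring

end InnerProductSpace

section Probability

variable {Ω : Type*} {m mΩ : MeasurableSpace Ω}

theorem measurable_apply_of_countable {ι γ : Type*} [MeasurableSpace ι] [Countable ι]
    [MeasurableSingletonClass ι] [MeasurableSpace γ] {f : ι → Ω → γ}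
    (hf : ∀ i, Measurable (f i)) {g : Ω → ι} (hg : Measurable g) :
    Measurable fun ω => f (g ω) ω :=
  (measurable_from_prod_countable_left (f := fun p : Ω × ι => f p.2 p.1) hf).comp
    (measurable_id.prodMk hg)

theorem indep_sup_right_of_indep_of_indep_sup {μ : Measure Ω} [IsProbabilityMeasure μ]
    {m₁ m₂ m₃ : MeasurableSpace Ω} (h₁ : m₁ ≤ mΩ) (h₂ : m₂ ≤ mΩ) (h₃ : m₃ ≤ mΩ)
    (h₁₂ : Indep m₁ m₂ μ) (h₁₂₃ : Indep (m₁ ⊔ m₂) m₃ μ) :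
    Indep m₁ (m₂ ⊔ m₃) μ := by
  let p : Set (Set Ω) := {s | ∃ s₂ s₃, MeasurableSet[m₂] s₂ ∧ MeasurableSet[m₃] s₃ ∧ s = s₂ ∩ s₃}
  have hp : IsPiSystem p := by
    rintro _ ⟨s₂, s₃, hs₂, hs₃, rfl⟩ _ ⟨t₂, t₃, ht₂, ht₃, rfl⟩ _
    exact ⟨s₂ ∩ t₂, s₃ ∩ t₃, hs₂.inter ht₂, hs₃.inter ht₃, Set.inter_inter_inter_comm _ _ _ _⟩
  have hgen : m₂ ⊔ m₃ = MeasurableSpace.generateFrom p := by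
    refine le_antisymm (sup_le (fun s hs => ?_) (fun s hs => ?_))
      (MeasurableSpace.generateFrom_le ?_)
    · exact MeasurableSpace.measurableSet_generateFrom ⟨s, _, hs, .univ, (Set.inter_univ s).symm⟩
    · exact MeasurableSpace.measurableSet_generateFrom ⟨_, s, .univ, hs, (Set.univ_inter s).symm⟩
    · rintro _ ⟨s₂, s₃, hs₂, hs₃, rfl⟩
      exact (le_sup_left (b := m₃) _ hs₂).inter (le_sup_right (a := m₂) _ hs₃)
  refine IndepSets.indep h₁ (sup_le h₂ h₃) (@MeasurableSpace.isPiSystem_measurableSet Ω m₁) hp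
    (@MeasurableSpace.generateFrom_measurableSet Ω m₁).symm hgen ?_
  rw [IndepSets_iff]
  rintro t _ ht ⟨s₂, s₃, hs₂, hs₃, rfl⟩
  rw [Indep_iff] at h₁₂ h₁₂₃
  have hs₂' : MeasurableSet[m₁ ⊔ m₂] s₂ := le_sup_right (a := m₁) _ hs₂
  rw [← Set.inter_assoc, h₁₂₃ _ _ ((le_sup_left (b := m₂) _ ht).inter hs₂') hs₃,
    h₁₂₃ _ _ hs₂' hs₃, h₁₂ _ _ ht hs₂, mul_assoc]

variable {μ : Measure Ω} [IsProbabilityMeasure μ] {ι : Type*} [Fintype ι] [MeasurableSpace ι]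
  [MeasurableSingletonClass ι] {X : Ω → ι} {g : ι → Ω → ℝ}

theorem condExp_apply_eq_card_inv_mul_sum_of_indep (hX : Measurable X) (hm : m ≤ mΩ)
    (hind : Indep (MeasurableSpace.comap X inferInstance) m μ)
    (hunif : ∀ a, μ {ω | X ω = a} = (Fintype.card ι : ℝ≥0∞)⁻¹)
    (hg : ∀ a, StronglyMeasurable[m] (g a)) (hint : Integrable (fun ω => g (X ω) ω) μ) :
    μ[fun ω => g (X ω) ω | m] =ᵐ[μ] fun ω => (Fintype.card ι : ℝ)⁻¹ * ∑ a, g a ω := by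
  let A : ι → Set Ω := fun a => X ⁻¹' {a}
  have hA : ∀ a, MeasurableSet (A a) := fun a => hX (measurableSet_singleton a)
  have hsplit : (fun ω => g (X ω) ω) = ∑ a, g a * (A a).indicator 1 := by
    ext ω
    classical
    simp [A, Set.indicator_apply]
  have hprob : ∀ a, μ[(A a).indicator (1 : Ω → ℝ) | m] =ᵐ[μ] fun _ => (Fintype.card ι : ℝ)⁻¹ := by
    intro a
    have hAm : MeasurableSet[MeasurableSpace.comap X inferInstance] (A a) :=
      ⟨{a}, measurableSet_singleton a, rfl⟩
    refine (condExp_indep_eq hX.comap_le hm (stronglyMeasurable_one.indicator hAm) hind).trans ?_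
    have hμA : μ.real (A a) = (Fintype.card ι : ℝ)⁻¹ := by
      rw [measureReal_def, show A a = {ω | X ω = a} from rfl, hunif, ENNReal.toReal_inv,
        ENNReal.toReal_natCast]
    rw [integral_indicator_one (hA a), hμA]
  have hint_term : ∀ a, Integrable (g a * (A a).indicator 1) μ := by
    intro a
    have heq : g a * (A a).indicator 1 = (A a).indicator fun ω => g (X ω) ω := by
      ext ω
      by_cases hω : X ω = a <;> simp [A, hω]
    exact heq ▸ hint.indicator (hA a)
  have hterm : ∀ a,
      μ[g a * (A a).indicator 1 | m] =ᵐ[μ] fun ω => (Fintype.card ι : ℝ)⁻¹ * g a ω := by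
    intro a
    refine (condExp_mul_of_stronglyMeasurable_left (hg a) (hint_term a)
      ((integrable_const 1).indicator (hA a))).trans ?_
    filter_upwards [hprob a] with ω hω
    rw [Pi.mul_apply, hω, mul_comm]
  rw [hsplit]
  filter_upwards [condExp_finsetSum (fun a _ => hint_term a) m, ae_all_iff.2 hterm] with ω hsum hω
  rw [hsum, Finset.sum_apply, mul_sum]
  exact sum_congr rfl fun a _ => hω a

theorem condExp_apply_le_card_inv_mul_sum_of_indep (hX : Measurable X) (hm : m ≤ mΩ)
    (hind : Indep (MeasurableSpace.comap X inferInstance) m μ)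
    (hunif : ∀ a, μ {ω | X ω = a} = (Fintype.card ι : ℝ≥0∞)⁻¹)
    (hg : ∀ a, StronglyMeasurable[m] (g a)) (hg_nonneg : ∀ a ω, 0 ≤ g a ω) :
    μ[fun ω => g (X ω) ω | m] ≤ᵐ[μ] fun ω => (Fintype.card ι : ℝ)⁻¹ * ∑ a, g a ω := by
  by_cases hint : Integrable (fun ω => g (X ω) ω) μ
  · exact (condExp_apply_eq_card_inv_mul_sum_of_indep hX hm hind hunif hg hint).le
  · rw [condExp_of_not_integrable hint]
    exact ae_of_all μ fun ω =>
      mul_nonneg (by positivity) (sum_nonneg fun a _ => hg_nonneg a ω)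

end Probability

namespace PiLp

variable {ι : Type*} {H : ι → Type*} [∀ i, NormedAddCommGroup (H i)]

theorem eq_sub_single_of_forall_apply [DecidableEq ι] {u v w : PiLp 2 H} {a : ι}
    (h : ∀ i, u i = if i = a then v i - w i else v i) : u = v - single 2 a (w a) := by
  ext i
  rw [h, sub_apply]
  by_cases hi : i = a
  · subst hi; rw [if_pos rfl, single_eq_same]
  · rw [if_neg hi, single_eq_of_ne 2 hi, sub_zero]

theorem measurable_single_apply [DecidableEq ι] {Ω : Type*} {mΩ : MeasurableSpace Ω}
    [MeasurableSpace (PiLp 2 H)] [BorelSpace (PiLp 2 H)] {v : Ω → PiLp 2 H} (hv : Measurable v)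
    (l : ι) :
    Measurable fun ω => single 2 l (v ω l) :=
  (show Continuous fun u : PiLp 2 H => single 2 l (u l) by
    simp only [← toLp_single]; fun_prop).measurable.comp hv

variable [Fintype ι]

theorem norm_toLp_ite_le (p : ι → Prop) [DecidablePred p] (v : PiLp 2 H) :
    ‖WithLp.toLp 2 (fun l => if p l then v l else 0 : ∀ l, H l)‖ ≤ ‖v‖ := by
  rw [← sq_le_sq₀ (norm_nonneg _) (norm_nonneg _), norm_sq_eq_of_L2, norm_sq_eq_of_L2]
  gcongr with l
  rw [WithLp.ofLp_toLp]
  split_ifs <;> simp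

theorem sub_eq_sum_toLp_ite_of_delayed (x : ℕ → PiLp 2 H) (k : ℕ) (j : ι → ℕ) {z : PiLp 2 H}
    (hz : ∀ l, z l = x (k - j l) l) :
    x k - z = ∑ i ∈ range (univ.sup j),
      WithLp.toLp 2 (fun l => if i < j l then (x (k - i) - x (k - i - 1)) l else 0 : ∀ l, H l) := by
  ext l
  rw [WithLp.ofLp_sum, Finset.sum_apply, sub_apply, hz]
  rw [← sum_filter]
  have hrange : {i ∈ range (univ.sup j) | i < j l} = range (j l) := by
    ext i
    have := le_sup (f := j) (mem_univ l)
    simp only [mem_filter, mem_range]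
    omega
  rw [hrange]
  simp_rw [sub_apply, Nat.sub_sub]
  exact (sum_range_sub' (fun i => (x (k - i)) l) (j l)).symm

variable [DecidableEq ι]

theorem sum_single_apply (v : PiLp 2 H) : ∑ l, single 2 l (v l) = v := by
  ext i
  simp [WithLp.ofLp_sum, Finset.sum_apply, ← toLp_single]

section Measurable

variable {Ω : Type*} {mΩ : MeasurableSpace Ω} [∀ i, SecondCountableTopology (H i)]
  [MeasurableSpace (PiLp 2 H)] [BorelSpace (PiLp 2 H)]

theorem measurable_sub_single_apply [MeasurableSpace ι] [MeasurableSingletonClass ι]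
    {v w : Ω → PiLp 2 H} {a : Ω → ι} (hv : Measurable v) (hw : Measurable w) (ha : Measurable a) :
    Measurable fun ω => v ω - single 2 (a ω) (w ω (a ω)) :=
  hv.sub (measurable_apply_of_countable (f := fun l ω => single 2 l (w ω l))
    (measurable_single_apply hw) ha)

theorem measurable_of_delayed {x : ℕ → Ω → PiLp 2 H} {n : ℕ} (hx : ∀ t ≤ n, Measurable (x t))
    {j : Ω → ι → ℕ} (hj : Measurable j) {z : Ω → PiLp 2 H}
    (hz : ∀ ω l, z ω l = x (n - j ω l) ω l) : Measurable z := by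
  have hsum : z = fun ω => ∑ l, single 2 l (x (n - j ω l) ω l) := by
    ext1 ω
    simp_rw [← hz]
    exact (sum_single_apply (z ω)).symm
  rw [hsum]
  refine Finset.measurable_sum _ fun l _ => measurable_apply_of_countable
    (f := fun t ω => single 2 l (x (n - t) ω l)) (fun t => ?_) ((measurable_pi_apply l).comp hj)
  exact measurable_single_apply (hx _ (Nat.sub_le n t)) l

end Measurable

variable [∀ i, InnerProductSpace ℝ (H i)]

theorem inner_single_right (v : PiLp 2 H) (a : ι) (w : H a) :
    inner ℝ v (single 2 a w) = inner ℝ (v a) w := by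
  rw [PiLp.inner_apply, Finset.sum_eq_single a
    (fun l _ hl => by rw [single_eq_of_ne 2 hl, inner_zero_right]) (by simp), single_eq_same]

theorem sum_norm_sub_single_sq (v w : PiLp 2 H) :
    ∑ a, ‖v - single 2 a (w a)‖ ^ 2 = Fintype.card ι * ‖v‖ ^ 2 - 2 * inner ℝ v w + ‖w‖ ^ 2 := by
  simp_rw [norm_sub_sq_real, inner_single_right, norm_single]
  rw [PiLp.inner_apply, norm_sq_eq_of_L2 _ v, norm_sq_eq_of_L2 _ w, sum_add_distrib,
    sum_sub_distrib, sum_const, card_univ, nsmul_eq_mul, mul_sum, mul_sum]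

end PiLp

namespace ARock

variable {ι : Type*} [Fintype ι] [DecidableEq ι] {H : ι → Type*} [∀ i, NormedAddCommGroup (H i)]
  [∀ i, InnerProductSpace ℝ (H i)]

theorem card_inv_mul_sum_norm_sub_single_sq_le [Nonempty ι] {T : PiLp 2 H → PiLp 2 H}
    (hT : LipschitzWith 1 T) {xs : PiLp 2 H} (hxs : Function.IsFixedPt T xs) (x : ℕ → PiLp 2 H)
    (k : ℕ) (j : ι → ℕ) {z : PiLp 2 H} (hz : ∀ l, z l = x (k - j l) l) {ε : ℕ → ℝ}
    (hε : ∀ i, 0 < ε i) {η : ℝ} (hη : 0 ≤ η) :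
    (Fintype.card ι : ℝ)⁻¹ * ∑ a, ‖x k - xs - PiLp.single 2 a ((η • (z - T z)) a)‖ ^ 2
      ≤ ‖x k - xs‖ ^ 2 + (1 / (Fintype.card ι : ℝ)) * ∑ i ∈ range (univ.sup j),
            ε (i + 1) * ‖x (k - i) - x (k - i - 1)‖ ^ 2
        - (η / Fintype.card ι) * ‖z - T z‖ ^ 2
          * (1 - η * (1 + ∑ i ∈ range (univ.sup j), (ε (i + 1))⁻¹)) := by
  have hcore := neg_two_mul_inner_sub_fixedPt_le hT hxs
    (PiLp.sub_eq_sum_toLp_ite_of_delayed x k j hz) (fun i _ => PiLp.norm_toLp_ite_le _ _)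
    (fun i _ => hε (i + 1)) hη
  have hcard : (Fintype.card ι : ℝ) ≠ 0 := by positivity
  rw [PiLp.sum_norm_sub_single_sq, real_inner_smul_right, norm_smul, Real.norm_of_nonneg hη]
  have hc := inv_mul_cancel₀ hcard
  linear_combination mul_le_mul_of_nonneg_left hcore (inv_nonneg.2 (Nat.cast_nonneg' _))
    + ‖x k - xs‖ ^ 2 * hc

section Filtration

variable {Ω E J : Type*} [MeasurableSpace E] [MeasurableSpace J]

abbrev pastSigma (x : ℕ → Ω → E) (j : ℕ → Ω → J) (n : ℕ) : MeasurableSpace Ω :=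
  (⨆ t ∈ Set.Iic n, MeasurableSpace.comap (x t) inferInstance)
    ⊔ ⨆ t ∈ Set.Iic n, MeasurableSpace.comap (j t) inferInstance

theorem pastSigma_le_iff {x : ℕ → Ω → E} {j : ℕ → Ω → J} {n : ℕ} {𝒢 : MeasurableSpace Ω} :
    pastSigma x j n ≤ 𝒢 ↔ ∀ t ≤ n, Measurable[𝒢] (x t) ∧ Measurable[𝒢] (j t) := by
  simp only [pastSigma, sup_le_iff, iSup₂_le_iff, Set.mem_Iic, measurable_iff_comap_le,
    ← forall_and]

end Filtration

variable {Ω : Type*} [MeasurableSpace ι] [MeasurableSingletonClass ι]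
  [∀ i, SecondCountableTopology (H i)] [MeasurableSpace (PiLp 2 H)] [BorelSpace (PiLp 2 H)]
  {T : PiLp 2 H → PiLp 2 H} {x xhat : ℕ → Ω → PiLp 2 H} {idx : ℕ → Ω → ι}
  {jv : ℕ → Ω → ι → ℕ} {η : ℕ → Ω → ℝ}

theorem measurable_iterate (hT : Continuous T)
    (hxhat : ∀ n ω l, xhat n ω l = x (n - jv n ω l) ω l)
    (hstep : ∀ n ω, x (n + 1) ω
      = x n ω - PiLp.single 2 (idx n ω) ((η n ω • (xhat n ω - T (xhat n ω))) (idx n ω)))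
    (hη : ∀ n, Measurable[pastSigma x jv n] (η n))
    {𝒢 : MeasurableSpace Ω} (hx₀ : Measurable[𝒢] (x 0)) (hjv : ∀ n, Measurable[𝒢] (jv n))
    {k : ℕ} (hidx : ∀ n < k, Measurable[𝒢] (idx n)) :
    ∀ t ≤ k, Measurable[𝒢] (x t) := by
  intro t
  induction t using Nat.strong_induction_on with
  | _ t ih =>
    intro ht
    cases t with
    | zero => exact hx₀
    | succ n =>
      have hpast : ∀ s ≤ n, Measurable[𝒢] (x s) := fun s hs => ih s (by omega) (by omega)
      have hxhat_n : Measurable[𝒢] (xhat n) :=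
        PiLp.measurable_of_delayed hpast (hjv n) (hxhat n)
      have hη_n : Measurable[𝒢] (η n) :=
        (hη n).mono (pastSigma_le_iff.2 fun s hs => ⟨hpast s hs, hjv s⟩) le_rfl
      rw [funext (hstep n)]
      exact PiLp.measurable_sub_single_apply (hpast n le_rfl)
        (hη_n.smul (hxhat_n.sub (hT.measurable.comp hxhat_n))) (hidx n (by omega))

theorem indep_comap_idx_pastSigma {mΩ : MeasurableSpace Ω} {μ : Measure Ω}
    [IsProbabilityMeasure μ] (hT : Continuous T)
    (hxhat : ∀ n ω l, xhat n ω l = x (n - jv n ω l) ω l)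
    (hstep : ∀ n ω, x (n + 1) ω
      = x n ω - PiLp.single 2 (idx n ω) ((η n ω • (xhat n ω - T (xhat n ω))) (idx n ω)))
    (hη : ∀ n, Measurable[pastSigma x jv n] (η n)) {x₀ : PiLp 2 H} (hx₀ : ∀ ω, x 0 ω = x₀)
    (hidx_meas : ∀ k, Measurable (idx k)) (hjv_meas : ∀ k, Measurable (jv k))
    (hidx_indep : iIndepFun idx μ)
    (hindep : IndepFun (fun ω k => idx k ω) (fun ω k => jv k ω) μ) (k : ℕ) :
    Indep (MeasurableSpace.comap (idx k) inferInstance) (pastSigma x jv k) μ := by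
  -- stated before the `let`s, which would otherwise be found as `MeasurableSpace Ω` instances
  have h𝒥 : MeasurableSpace.comap (fun ω n => jv n ω) inferInstance ≤ mΩ :=
    (measurable_pi_iff.2 hjv_meas).comap_le
  let 𝒜 : ℕ → MeasurableSpace Ω := fun n => MeasurableSpace.comap (idx n) inferInstance
  let ℬ : MeasurableSpace Ω := ⨆ n ∈ Set.Iio k, 𝒜 n
  let 𝒥 : MeasurableSpace Ω := MeasurableSpace.comap (fun ω n => jv n ω) inferInstance
  have h𝒜 : ∀ n, 𝒜 n ≤ mΩ := fun n => (hidx_meas n).comap_le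
  have h𝒜ℬ : Indep (𝒜 k) ℬ μ := by
    simpa [ℬ] using indep_iSup_of_disjoint h𝒜 hidx_indep (S := {k}) (T := Set.Iio k) (by simp)
  have h𝒜ℬ𝒥 : Indep (𝒜 k ⊔ ℬ) 𝒥 μ :=
    indep_of_indep_of_le_left hindep (sup_le (MeasurableSpace.comap_le_comap_pi k)
      (iSup₂_le fun n _ => MeasurableSpace.comap_le_comap_pi n))
  have hpast : pastSigma x jv k ≤ ℬ ⊔ 𝒥 := by
    have hjv : ∀ n, Measurable[ℬ ⊔ 𝒥] (jv n) := fun n =>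
      measurable_iff_comap_le.2 ((MeasurableSpace.comap_le_comap_pi (g := jv) n).trans le_sup_right)
    have hidx : ∀ n < k, Measurable[ℬ ⊔ 𝒥] (idx n) := fun n hn => measurable_iff_comap_le.2
      ((le_iSup₂ (f := fun n (_ : n ∈ Set.Iio k) => 𝒜 n) n hn).trans le_sup_left)
    have hx₀' : Measurable[ℬ ⊔ 𝒥] (x 0) := funext hx₀ ▸ measurable_const
    exact pastSigma_le_iff.2 fun t ht =>
      ⟨measurable_iterate hT hxhat hstep hη hx₀' hjv hidx t ht, hjv t⟩
  refine indep_of_indep_of_le_right ?_ hpast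
  exact indep_sup_right_of_indep_of_indep_sup (h𝒜 k) (iSup₂_le fun n _ => h𝒜 n)
    h𝒥 h𝒜ℬ h𝒜ℬ𝒥

end ARock

theorem arock_fundamental_inequality_general
    {m : ℕ} (hm : 0 < m)
    {H : Fin m → Type*} [∀ i, NormedAddCommGroup (H i)]
    [∀ i, InnerProductSpace ℝ (H i)]
    [∀ i, SecondCountableTopology (H i)]
    [MeasurableSpace (PiLp 2 H)] [BorelSpace (PiLp 2 H)]
    (T : PiLp 2 H → PiLp 2 H) (hT : LipschitzWith 1 T)
    (xs : PiLp 2 H) (hxs : T xs = xs)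
    {Ω : Type*} [MeasurableSpace Ω] (μ : Measure Ω) [IsProbabilityMeasure μ]
    -- block indices and delay vectors
    (idx : ℕ → Ω → Fin m) (jv : ℕ → Ω → Fin m → ℕ)
    (hidx_meas : ∀ k, Measurable (idx k))
    (hjv_meas : ∀ k, Measurable (jv k))
    -- blocks are IID uniform
    (hidx_unif : ∀ k a, μ {ω | idx k ω = a} = ((m : ℝ≥0∞))⁻¹)
    (hidx_indep : iIndepFun idx μ)
    -- delays are IID, independent of the blocks, and evenly old
    (hindep : IndepFun (fun ω k => idx k ω) (fun ω k => jv k ω) μ)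
    -- parameters ε₁, ε₂, … ∈ (0,∞)
    (ε : ℕ → ℝ) (hε : ∀ i, 0 < ε i)
    -- the iterates, with possibly random step size
    (η : ℕ → Ω → ℝ) (hη_pos : ∀ k ω, 0 < η k ω)
    (x : ℕ → Ω → PiLp 2 H) (x0 : PiLp 2 H) (hx0 : ∀ ω, x 0 ω = x0)
    (hx_meas : ∀ k, Measurable (x k))
    -- the delayed iterate x̂^k, with x̂^k_l = x^{k−j(k,l)}_l (and x^n = x^0 for n < 0)
    (xhat : ℕ → Ω → PiLp 2 H)
    (hxhat : ∀ (k : ℕ) (ω : Ω) (l : Fin m), xhat k ω l = x (k - jv k ω l) ω l)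
    -- the filtration F^k = σ(x^0,…,x^k, j⃗(0),…,j⃗(k))
    (F : ℕ → MeasurableSpace Ω)
    (hF : ∀ k, F k = (⨆ t ∈ Set.Iic k, MeasurableSpace.comap (x t) inferInstance)
        ⊔ ⨆ t ∈ Set.Iic k, MeasurableSpace.comap (jv t) inferInstance)
    -- η^k is F^k-measurable and independent of i(k)
    (hη_meas : ∀ k, Measurable[F k] (η k))
    -- the ARock recursion
    (hrec : ∀ (k : ℕ) (ω : Ω) (i : Fin m),
      x (k + 1) ω i = if i = idx k ω then
          x k ω i - η k ω • (xhat k ω i - T (xhat k ω) i)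
        else x k ω i) :
    -- conclusion
    ∀ k : ℕ, ∀ᵐ ω ∂μ,
      (μ[fun ω' => ‖x (k + 1) ω' - xs‖ ^ 2 | F k]) ω
        ≤ ‖x k ω - xs‖ ^ 2
          + (1 / (m : ℝ)) * ∑ i ∈ Finset.range (Finset.univ.sup (jv k ω)),
              ε (i + 1) * ‖x (k - i) ω - x (k - i - 1) ω‖ ^ 2
          - (η k ω / m) * ‖xhat k ω - T (xhat k ω)‖ ^ 2
            * (1 - η k ω * (1 + ∑ i ∈ Finset.range (Finset.univ.sup (jv k ω)),
                (ε (i + 1))⁻¹)) := by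
  intro k
  have hstep : ∀ n ω, x (n + 1) ω
      = x n ω - PiLp.single 2 (idx n ω) ((η n ω • (xhat n ω - T (xhat n ω))) (idx n ω)) :=
    fun n ω => PiLp.eq_sub_single_of_forall_apply (hrec n ω)
  have hF_eq : F = ARock.pastSigma x jv := funext hF
  subst hF_eq
  have hF_le : ARock.pastSigma x jv k ≤ ‹MeasurableSpace Ω› :=
    ARock.pastSigma_le_iff.2 fun t _ => ⟨hx_meas t, hjv_meas t⟩
  have hind := ARock.indep_comap_idx_pastSigma hT.continuous hxhat hstep hη_meas hx0 hidx_meas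
    hjv_meas hidx_indep hindep k
  have hpast := ARock.pastSigma_le_iff.1 (le_refl (ARock.pastSigma x jv k))
  have hxhat_meas : Measurable[ARock.pastSigma x jv k] (xhat k) :=
    PiLp.measurable_of_delayed (fun t ht => (hpast t ht).1) (hpast k le_rfl).2 (hxhat k)
  have hG : ∀ a, StronglyMeasurable[ARock.pastSigma x jv k] fun ω =>
      ‖x k ω - xs - PiLp.single 2 a ((η k ω • (xhat k ω - T (xhat k ω))) a)‖ ^ 2 := fun a =>
    ((measurable_norm.comp (((hpast k le_rfl).1.sub_const xs).sub
      (PiLp.measurable_single_apply ((hη_meas k).smul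
        (hxhat_meas.sub (hT.continuous.measurable.comp hxhat_meas))) a))).pow_const
          2).stronglyMeasurable
  have hcond := condExp_apply_le_card_inv_mul_sum_of_indep (hidx_meas k) hF_le hind
    (by simpa using hidx_unif k) hG (fun _ _ => sq_nonneg _)
  have : Nonempty (Fin m) := ⟨⟨0, hm⟩⟩
  filter_upwards [hcond] with ω hω
  simp_rw [hstep, sub_right_comm _ _ xs]
  refine hω.trans ?_
  simpa using ARock.card_inv_mul_sum_norm_sub_single_sq_le hT hxs (fun n => x n ω) k (jv k ω)
    (hxhat k ω) hε (hη_pos k ω).le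

/-- **Fundamental inequality.** Under IID uniform blocks, IID evenly old delays independent
of the blocks, and an `F^k`-measurable step size independent of `i(k)`, for any fixed point
`x*` of `T`, any positive parameters `ε₁, ε₂, …` and every `k`, the ARock iterates satisfy
`E[‖x^{k+1} − x*‖² | F^k] ≤ ‖x^k − x*‖² + (1/m) ∑_{i=1}^{j(k)} εᵢ ‖x^{k+1−i} − x^{k−i}‖²
  − (η^k/m) ‖S x̂^k‖² (1 − η^k (1 + ∑_{i=1}^{j(k)} 1/εᵢ))`. -/
theorem arock_fundamental_inequality
    {m : ℕ} (hm : 0 < m)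
    {H : Fin m → Type*} [∀ i, NormedAddCommGroup (H i)]
    [∀ i, InnerProductSpace ℝ (H i)] [∀ i, CompleteSpace (H i)]
    [∀ i, SecondCountableTopology (H i)]
    [MeasurableSpace (PiLp 2 H)] [BorelSpace (PiLp 2 H)]
    (T : PiLp 2 H → PiLp 2 H) (hT : LipschitzWith 1 T)
    (xs : PiLp 2 H) (hxs : T xs = xs)
    {Ω : Type*} [MeasurableSpace Ω] (μ : Measure Ω) [IsProbabilityMeasure μ]
    -- block indices and delay vectors
    (idx : ℕ → Ω → Fin m) (jv : ℕ → Ω → Fin m → ℕ)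
    (hidx_meas : ∀ k, Measurable (idx k))
    (hjv_meas : ∀ k, Measurable (jv k))
    -- blocks are IID uniform
    (hidx_unif : ∀ k a, μ {ω | idx k ω = a} = ((m : ℝ≥0∞))⁻¹)
    (hidx_indep : iIndepFun idx μ)
    -- delays are IID, independent of the blocks, and evenly old
    (hjv_indep : iIndepFun jv μ)
    (hjv_ident : ∀ k, IdentDistrib (jv k) (jv 0) μ μ)
    (hindep : IndepFun (fun ω k => idx k ω) (fun ω k => jv k ω) μ)
    (hevenold : ∃ B : ℕ, ∀ᵐ ω ∂μ, ∀ (k : ℕ) (i l : Fin m),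
      |(jv k ω i : ℤ) - (jv k ω l : ℤ)| ≤ (B : ℤ))
    -- parameters ε₁, ε₂, … ∈ (0,∞)
    (ε : ℕ → ℝ) (hε : ∀ i, 0 < ε i)
    -- the iterates, with possibly random step size
    (η : ℕ → Ω → ℝ) (hη_pos : ∀ k ω, 0 < η k ω)
    (x : ℕ → Ω → PiLp 2 H) (x0 : PiLp 2 H) (hx0 : ∀ ω, x 0 ω = x0)
    (hx_meas : ∀ k, Measurable (x k))
    -- the delayed iterate x̂^k, with x̂^k_l = x^{k−j(k,l)}_l (and x^n = x^0 for n < 0)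
    (xhat : ℕ → Ω → PiLp 2 H)
    (hxhat : ∀ (k : ℕ) (ω : Ω) (l : Fin m), xhat k ω l = x (k - jv k ω l) ω l)
    -- the filtration F^k = σ(x^0,…,x^k, j⃗(0),…,j⃗(k))
    (F : ℕ → MeasurableSpace Ω)
    (hF : ∀ k, F k = (⨆ t ∈ Set.Iic k, MeasurableSpace.comap (x t) inferInstance)
        ⊔ ⨆ t ∈ Set.Iic k, MeasurableSpace.comap (jv t) inferInstance)
    -- η^k is F^k-measurable and independent of i(k)
    (hη_meas : ∀ k, Measurable[F k] (η k))
    (hη_indep : ∀ k, IndepFun (η k) (idx k) μ)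
    -- the ARock recursion
    (hrec : ∀ (k : ℕ) (ω : Ω) (i : Fin m),
      x (k + 1) ω i = if i = idx k ω then
          x k ω i - η k ω • (xhat k ω i - T (xhat k ω) i)
        else x k ω i) :
    -- conclusion
    ∀ k : ℕ, ∀ᵐ ω ∂μ,
      (μ[fun ω' => ‖x (k + 1) ω' - xs‖ ^ 2 | F k]) ω
        ≤ ‖x k ω - xs‖ ^ 2
          + (1 / (m : ℝ)) * ∑ i ∈ Finset.range (Finset.univ.sup (jv k ω)),
              ε (i + 1) * ‖x (k - i) ω - x (k - i - 1) ω‖ ^ 2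
          - (η k ω / m) * ‖xhat k ω - T (xhat k ω)‖ ^ 2
            * (1 - η k ω * (1 + ∑ i ∈ Finset.range (Finset.univ.sup (jv k ω)),
                (ε (i + 1))⁻¹)) :=
  arock_fundamental_inequality_general hm T hT xs hxs μ idx jv hidx_meas hjv_meas hidx_unif
    hidx_indep hindep ε hε η hη_pos x x0 hx0 hx_meas xhat hxhat F hF hη_meas hrec
end

section
/- (Convergence criterion for nonexpansive fixed-point iterations) Let H be a separable real Hilbert space, T : H → H a nonexpansive operator with at least one fixed point, and (x^k) a sequence in H. If (1) ‖x^k − x*‖ converges (to a finite limit) for every fixed point x* of T, and (2) ‖T x^k − x^k‖ → 0, then x^k converges weakly to some fixed point of T. -/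
open Filter
open scoped Topology RealInnerProductSpace

/-!
A bounded sequence in a Hilbert space has a weak limit along every ultrafilter (Banach–Alaoglu
plus Riesz). Along an ultrafilter finer than `atTop` such a limit `z` is a fixed point of `T`:
`‖x - T z‖² - ‖x - z‖²` tends to `‖z - T z‖²`, yet nonexpansiveness bounds it by
`O(‖T x - x‖) → 0`. Two such limits `z₁, z₂` coincide (Opial): since `‖x - z₁‖` and `‖x - z₂‖`
converge, so does `⟪x, z₁ - z₂⟫`, and its limit is both `⟪z₁, z₁ - z₂⟫` and `⟪z₂, z₁ - z₂⟫`.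
All ultrafilter limits agreeing is exactly weak convergence.
-/

section
variable {ι E : Type*} [NormedAddCommGroup E] [InnerProductSpace ℝ E]

def TendstoWeakly (x : ι → E) (l : Filter ι) (z : E) : Prop :=
  ∀ y, Tendsto (fun i => ⟪x i, y⟫) l (𝓝 ⟪z, y⟫)

theorem tendstoWeakly_iff_ultrafilter {x : ι → E} {l : Filter ι} {z : E} :
    TendstoWeakly x l z ↔ ∀ U : Ultrafilter ι, ↑U ≤ l → TendstoWeakly x U z := by
  simp only [TendstoWeakly, tendsto_iff_ultrafilter _ l]
  exact ⟨fun h U hU y => h y U hU, fun h y U hU => h U hU y⟩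

theorem exists_tendstoWeakly_of_norm_le [CompleteSpace E] {x : ι → E} {M : ℝ}
    (hx : ∀ i, ‖x i‖ ≤ M) (U : Ultrafilter ι) : ∃ z, TendstoWeakly x U z := by
  let φ : ι → WeakDual ℝ E := fun i => InnerProductSpace.toDual ℝ E (x i)
  have hφ : (U.map φ : Filter (WeakDual ℝ E)) ≤
      𝓟 (WeakDual.toStrongDual ⁻¹' Metric.closedBall (0 : StrongDual ℝ E) M) := by
    rw [Ultrafilter.coe_map, le_principal_iff, mem_map]
    exact univ_mem' fun i => mem_closedBall_zero_iff.2 <|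
      ((InnerProductSpace.toDual ℝ E).norm_map (x i)).trans_le (hx i)
  obtain ⟨ψ, -, hψ⟩ := (WeakDual.isCompact_closedBall 0 M).ultrafilter_le_nhds _ hφ
  refine ⟨(InnerProductSpace.toDual ℝ E).symm (WeakDual.toStrongDual ψ), fun y => ?_⟩
  rw [InnerProductSpace.toDual_symm_apply]
  exact ((WeakDual.eval_continuous y).tendsto ψ).comp hψ

theorem TendstoWeakly.eq_of_tendsto_norm_sub {x : ι → E} {F l₁ l₂ : Filter ι} [l₁.NeBot]
    [l₂.NeBot] (hl₁ : l₁ ≤ F) (hl₂ : l₂ ≤ F) {z₁ z₂ : E} {r₁ r₂ : ℝ}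
    (hr₁ : Tendsto (fun i => ‖x i - z₁‖) F (𝓝 r₁)) (hr₂ : Tendsto (fun i => ‖x i - z₂‖) F (𝓝 r₂))
    (hx₁ : TendstoWeakly x l₁ z₁) (hx₂ : TendstoWeakly x l₂ z₂) : z₁ = z₂ := by
  have hpolar (i : ι) :
      2 * ⟪x i, z₁ - z₂⟫ = ‖x i - z₂‖ ^ 2 - ‖x i - z₁‖ ^ 2 + ‖z₁‖ ^ 2 - ‖z₂‖ ^ 2 := by
    rw [norm_sub_sq_real, norm_sub_sq_real, inner_sub_right]
    ring
  have hF : Tendsto (fun i => 2 * ⟪x i, z₁ - z₂⟫) F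
      (𝓝 (r₂ ^ 2 - r₁ ^ 2 + ‖z₁‖ ^ 2 - ‖z₂‖ ^ 2)) := by
    simp only [hpolar]
    exact (((hr₂.pow 2).sub (hr₁.pow 2)).add_const _).sub_const _
  have h₁ := tendsto_nhds_unique (hF.mono_left hl₁) ((hx₁ (z₁ - z₂)).const_mul 2)
  have h₂ := tendsto_nhds_unique (hF.mono_left hl₂) ((hx₂ (z₁ - z₂)).const_mul 2)
  have : ⟪z₁ - z₂, z₁ - z₂⟫ = 0 := by
    rw [inner_sub_left]
    linarith
  exact sub_eq_zero.1 (inner_self_eq_zero.1 this)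

/-- Opial's lemma, with weak cluster points expressed as weak limits along ultrafilters. -/
theorem exists_tendstoWeakly_of_tendsto_norm_sub [CompleteSpace E] {x : ι → E} {l : Filter ι}
    [l.NeBot] {S : Set E} {M : ℝ} (hx : ∀ i, ‖x i‖ ≤ M)
    (hS : ∀ s ∈ S, ∃ r, Tendsto (fun i => ‖x i - s‖) l (𝓝 r))
    (hcluster : ∀ (U : Ultrafilter ι) (z : E), ↑U ≤ l → TendstoWeakly x U z → z ∈ S) :
    ∃ z ∈ S, TendstoWeakly x l z := by
  have hlim (U : Ultrafilter ι) (hU : ↑U ≤ l) : ∃ z ∈ S, TendstoWeakly x U z :=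
    let ⟨z, hz⟩ := exists_tendstoWeakly_of_norm_le hx U
    ⟨z, hcluster U z hU hz, hz⟩
  obtain ⟨z, hzS, hz⟩ := hlim (Ultrafilter.of l) (Ultrafilter.of_le l)
  refine ⟨z, hzS, tendstoWeakly_iff_ultrafilter.2 fun U hU => ?_⟩
  obtain ⟨z', hz'S, hz'⟩ := hlim U hU
  obtain ⟨r, hr⟩ := hS z hzS
  obtain ⟨r', hr'⟩ := hS z' hz'S
  rwa [hz'.eq_of_tendsto_norm_sub hU (Ultrafilter.of_le l) hr' hr hz] at hz'

theorem LipschitzWith.apply_eq_of_tendstoWeakly {T : E → E} (hT : LipschitzWith 1 T)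
    {x : ι → E} {l : Filter ι} [l.NeBot] {z : E} {M : ℝ} (hx : ∀ i, ‖x i‖ ≤ M)
    (hres : Tendsto (fun i => ‖T (x i) - x i‖) l (𝓝 0)) (hxz : TendstoWeakly x l z) :
    T z = z := by
  set e := fun i => ‖T (x i) - x i‖
  have hexpand (i : ι) :
      ‖x i - T z‖ ^ 2 - ‖x i - z‖ ^ 2 = 2 * ⟪x i - z, z - T z⟫ + ‖z - T z‖ ^ 2 := by
    rw [← sub_add_sub_cancel (x i) z (T z), norm_add_sq_real]
    ring
  have hlim : Tendsto (fun i => ‖x i - T z‖ ^ 2 - ‖x i - z‖ ^ 2) l (𝓝 (‖z - T z‖ ^ 2)) := by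
    simp only [hexpand, inner_sub_left]
    simpa using (((hxz (z - T z)).sub_const ⟪z, z - T z⟫).const_mul 2).add_const (‖z - T z‖ ^ 2)
  have hbound (i : ι) : ‖x i - T z‖ ^ 2 - ‖x i - z‖ ^ 2 ≤ e i * (e i + 2 * (M + ‖z‖)) := by
    have hdist : ‖x i - z‖ ≤ M + ‖z‖ := (_root_.norm_sub_le _ _).trans (by linarith [hx i])
    have htri : ‖x i - T z‖ ≤ e i + ‖x i - z‖ := calc
      ‖x i - T z‖ ≤ ‖x i - T (x i)‖ + ‖T (x i) - T z‖ := norm_sub_le_norm_sub_add_norm_sub _ _ _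
      _ ≤ e i + ‖x i - z‖ := by
        rw [norm_sub_rev]
        exact add_le_add le_rfl (by simpa using hT.norm_sub_le (x i) z)
    nlinarith [norm_nonneg (x i - T z), norm_nonneg (T (x i) - x i)]
  have hzero : Tendsto (fun i => e i * (e i + 2 * (M + ‖z‖))) l (𝓝 0) := by
    simpa using hres.mul (hres.add_const _)
  have : ‖z - T z‖ ^ 2 ≤ 0 := le_of_tendsto_of_tendsto' hlim hzero hbound
  have : z - T z = 0 := by simpa using this.antisymm (sq_nonneg _)
  exact (sub_eq_zero.1 this).symm

end

theorem nonexpansive_fixed_point_convergence_criterion_general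
    {E : Type*} [NormedAddCommGroup E] [InnerProductSpace ℝ E] [CompleteSpace E]
    (T : E → E) (hT : LipschitzWith 1 T) (hfix : ∃ z, T z = z)
    (x : ℕ → E)
    (h1 : ∀ xs : E, T xs = xs →
      ∃ r : ℝ, Tendsto (fun k => ‖x k - xs‖) atTop (𝓝 r))
    (h2 : Tendsto (fun k => ‖T (x k) - x k‖) atTop (𝓝 0)) :
    ∃ z : E, T z = z ∧
      ∀ y : E, Tendsto (fun k => (inner ℝ (x k) y : ℝ)) atTop (𝓝 (inner ℝ z y : ℝ)) := by
  obtain ⟨z₀, hz₀⟩ := hfix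
  obtain ⟨r₀, hr₀⟩ := h1 z₀ hz₀
  obtain ⟨C, hC⟩ := hr₀.bddAbove_range
  have hx (k : ℕ) : ‖x k‖ ≤ ‖z₀‖ + C := (norm_le_insert' _ _).trans (by gcongr; exact hC ⟨k, rfl⟩)
  obtain ⟨z, hz, hxz⟩ := exists_tendstoWeakly_of_tendsto_norm_sub (S := {z | T z = z}) hx h1
    fun U _ hU hxz => hT.apply_eq_of_tendstoWeakly hx (h2.mono_left hU) hxz
  exact ⟨z, hz, hxz⟩

/-- **Convergence criterion for nonexpansive fixed-point iterations.** If `T` is a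
nonexpansive operator on a separable real Hilbert space with a fixed point, `‖x^k − x*‖`
converges for every fixed point `x*`, and `‖T x^k − x^k‖ → 0`, then `x^k` converges
weakly to some fixed point of `T`. -/
theorem nonexpansive_fixed_point_convergence_criterion
    {E : Type*} [NormedAddCommGroup E] [InnerProductSpace ℝ E] [CompleteSpace E]
    [SecondCountableTopology E]
    (T : E → E) (hT : LipschitzWith 1 T) (hfix : ∃ z, T z = z)
    (x : ℕ → E)
    (h1 : ∀ xs : E, T xs = xs →
      ∃ r : ℝ, Tendsto (fun k => ‖x k - xs‖) atTop (𝓝 r))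
    (h2 : Tendsto (fun k => ‖T (x k) - x k‖) atTop (𝓝 0)) :
    ∃ z : E, T z = z ∧
      ∀ y : E, Tendsto (fun k => (inner ℝ (x k) y : ℝ)) atTop (𝓝 (inner ℝ z y : ℝ)) :=
  nonexpansive_fixed_point_convergence_criterion_general T hT hfix x h1 h2
end
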